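/- Let (Ω, 𝓕, P) be a probability space and let X, v, ζ : Ω → ℝ^{d×r} be random matrices such that, almost surely: X ∈ St(d,r); ζ ∈ T_X is the minimizer over T_X of φ(ζ') = ⟨v, ζ'⟩ + (1/(2γ))‖ζ'‖² + h(X + ζ'); f(Retr_X(ηζ)) ≤ f(X) + η⟨∇f(X), ζ⟩ + (L_R η²/2)‖ζ‖²; and ‖Retr_X(ηζ) − (X + ηζ)‖ ≤ M₂ η² ‖ζ‖², where Retr is the polar retraction. Assume η ∈ (0,1], γ > 0, L_R, L_h, M₂ > 0, σ ≥ 0, s > 0, h : ℝ^{d×r} → ℝ is convex and L_h-Lipschitz, f : ℝ^{d×r} → ℝ is differentiable, F = f + h, all the indicated expectations are finite, and E[‖v − ∇f(X)‖²] ≤ σ²/s. Then E[F(Retr_X(ηζ)) − F(X)] ≤ (L̃η² − η/γ + 1/2) E[‖ζ‖²] + η²σ²/(2s), where L̃ = L_R/2 + L_h M₂. -/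

import Mathlib

open Matrix MeasureTheory Finset

noncomputable section

/-- The space of real `d × r` matrices. -/
abbrev Mat (d r : ℕ) := Matrix (Fin d) (Fin r) ℝ

/-- The Frobenius inner product `⟨A, B⟩ = tr(Aᵀ B)`. -/
def finner {d r : ℕ} (A B : Mat d r) : ℝ := (Aᵀ * B).trace

/-- The Stiefel manifold `St(d,r) = {X : Xᵀ X = I}`. -/
def Stiefel {d r : ℕ} (X : Mat d r) : Prop := Xᵀ * X = 1

/-- The tangent space to the Stiefel manifold at `X`:
`T_X = {ζ : ζᵀ X + Xᵀ ζ = 0}`. -/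
def TangentAt {d r : ℕ} (X : Mat d r) : Set (Mat d r) :=
  {ζ | ζᵀ * X + Xᵀ * ζ = 0}

lemma posSemidef_one_add_transpose_mul_self {d r : ℕ} (ξ : Mat d r) :
    (1 + ξᵀ * ξ).PosSemidef := by
  have h := Matrix.posSemidef_conjTranspose_mul_self ξ
  rw [Matrix.conjTranspose_eq_transpose_of_trivial] at h
  exact Matrix.PosSemidef.one.add h

/-- The polar retraction `Retr_X(ξ) = (X + ξ)(I + ξᵀ ξ)^{-1/2}`, where the square root
is the unique positive-semidefinite (here positive-definite) square root. -/
def polarRetr {d r : ℕ} (X ξ : Mat d r) : Mat d r :=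
  (X + ξ) * ((posSemidef_one_add_transpose_mul_self ξ).1.eigenvectorUnitary.1 *
    diagonal (RCLike.ofReal ∘ Real.sqrt ∘ (posSemidef_one_add_transpose_mul_self ξ).1.eigenvalues) *
    (star (posSemidef_one_add_transpose_mul_self ξ).1.eigenvectorUnitary : Mat r r))⁻¹

/- Equip matrices with the Frobenius norm (the norm induced by `finner`). -/
attribute [local instance] Matrix.frobeniusNormedAddCommGroup Matrix.frobeniusNormedSpace

/-- The subproblem objective `φ(ζ) = ⟨v, ζ⟩ + (1/(2γ))‖ζ‖² + h(X + ζ)`. -/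
def phi {d r : ℕ} (γ : ℝ) (h : Mat d r → ℝ) (X v ζ : Mat d r) : ℝ :=
  finner v ζ + (1 / (2 * γ)) * ‖ζ‖ ^ 2 + h (X + ζ)

/-- `ζ` is a minimizer of `phi γ h X v` over the tangent space at `X`. -/
def IsSubMin {d r : ℕ} (γ : ℝ) (h : Mat d r → ℝ) (X v ζ : Mat d r) : Prop :=
  ζ ∈ TangentAt X ∧ ∀ ζ' ∈ TangentAt X, phi γ h X v ζ ≤ phi γ h X v ζ'

/-! ### Auxiliary lemmas -/

section AuxLemmas

variable {d r : ℕ}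

lemma finner_comm (A B : Mat d r) : finner A B = finner B A := by
  unfold finner
  rw [← Matrix.trace_transpose, Matrix.transpose_mul, Matrix.transpose_transpose]

lemma finner_sub_left (A B C : Mat d r) :
    finner (A - B) C = finner A C - finner B C := by
  unfold finner
  rw [Matrix.transpose_sub, Matrix.sub_mul, Matrix.trace_sub]

lemma finner_smul_left (c : ℝ) (A B : Mat d r) :
    finner (c • A) B = c * finner A B := by
  unfold finner
  rw [Matrix.transpose_smul, Matrix.smul_mul, Matrix.trace_smul, smul_eq_mul]

lemma finner_smul_right (c : ℝ) (A B : Mat d r) :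
    finner A (c • B) = c * finner A B := by
  rw [finner_comm, finner_smul_left, finner_comm]

lemma finner_self_eq (A : Mat d r) : finner A A = ‖A‖ ^ 2 := by
  have h1 : ‖A‖ = (∑ i, ∑ j, ‖A i j‖ ^ (2 : ℝ)) ^ (1 / 2 : ℝ) :=
    Matrix.frobenius_norm_def A
  have hnn : (0:ℝ) ≤ ∑ i, ∑ j, ‖A i j‖ ^ (2 : ℝ) := by
    apply Finset.sum_nonneg; intro i _
    apply Finset.sum_nonneg; intro j _
    positivity
  have h2 : ‖A‖ ^ 2 = ∑ i, ∑ j, ‖A i j‖ ^ (2 : ℝ) := by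
    rw [h1, ← Real.rpow_natCast (_ ^ (1/2 : ℝ)) 2, ← Real.rpow_mul hnn]
    norm_num
  rw [h2]
  unfold finner
  rw [Matrix.trace]
  simp only [Matrix.diag_apply, Matrix.mul_apply, Matrix.transpose_apply]
  rw [Finset.sum_comm]
  congr 1
  ext i
  congr 1
  ext j
  rw [Real.rpow_two, Real.norm_eq_abs, sq_abs]
  ring

lemma norm_sub_sq_finner (A B : Mat d r) :
    ‖A - B‖ ^ 2 = ‖A‖ ^ 2 - 2 * finner A B + ‖B‖ ^ 2 := by
  have h : finner (A - B) (A - B)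
      = finner A A - finner A B - (finner B A - finner B B) := by
    rw [finner_sub_left]
    rw [show finner A (A - B) = finner (A - B) A from finner_comm _ _,
      finner_sub_left,
      show finner B (A - B) = finner (A - B) B from finner_comm _ _,
      finner_sub_left]
    ring
  have hBA : finner B A = finner A B := finner_comm _ _
  rw [← finner_self_eq, ← finner_self_eq, ← finner_self_eq, h, hBA]
  ring

lemma norm_smul_sq (c : ℝ) (A : Mat d r) : ‖c • A‖ ^ 2 = c ^ 2 * ‖A‖ ^ 2 := by
  rw [norm_smul, mul_pow, Real.norm_eq_abs, sq_abs]

lemma le_zero_of_forall_le_mul {x c : ℝ} (hc : 0 ≤ c)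
    (H : ∀ t : ℝ, 0 < t → t ≤ 1 → x ≤ t * c) : x ≤ 0 := by
  by_contra hx
  push_neg at hx
  rcases eq_or_lt_of_le hc with h0 | h0
  · have := H 1 one_pos le_rfl
    rw [← h0] at this
    linarith
  · have ht0 : 0 < min 1 (x / (2 * c)) := lt_min one_pos (by positivity)
    have h1 := H _ ht0 (min_le_left _ _)
    have h2 : x ≤ x / (2 * c) * c :=
      h1.trans (mul_le_mul_of_nonneg_right (min_le_right _ _) hc)
    rw [div_mul_eq_mul_div, mul_div_assoc] at h2
    have : c / (2 * c) = 1 / 2 := by field_simp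
    rw [this] at h2
    nlinarith

/-- Pointwise deterministic descent bound. -/
lemma pointwise_bound {d r : ℕ} (γ η L_R L_h M₂ : ℝ)
    (hη0 : 0 < η) (hη1 : η ≤ 1) (hγ : 0 < γ) (hLh : 0 ≤ L_h)
    (f h : Mat d r → ℝ)
    (hconv : ConvexOn ℝ Set.univ h)
    (hlip : ∀ A B : Mat d r, |h A - h B| ≤ L_h * ‖A - B‖)
    (X v ζ R g : Mat d r)
    (hmin : IsSubMin γ h X v ζ)
    (hf : f R ≤ f X + η * finner g ζ + (L_R * η ^ 2 / 2) * ‖ζ‖ ^ 2)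
    (hRd : ‖R - (X + η • ζ)‖ ≤ M₂ * η ^ 2 * ‖ζ‖ ^ 2) :
    (f R + h R) - (f X + h X) ≤
      ((L_R / 2 + L_h * M₂) * η ^ 2 - η / γ + 1 / 2) * ‖ζ‖ ^ 2
        + (η ^ 2 / 2) * ‖v - g‖ ^ 2 := by
  obtain ⟨htan, hopt⟩ := hmin
  -- Step A: prox inequality
  have hstep : ∀ t : ℝ, 0 < t → t ≤ 1 →
      finner v ζ + h (X + ζ) - h X + (1 / γ) * ‖ζ‖ ^ 2 ≤ t * (‖ζ‖ ^ 2 / (2 * γ)) := by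
    intro t ht0 ht1
    have hmem : (1 - t) • ζ ∈ TangentAt X := by
      simp only [TangentAt, Set.mem_setOf_eq] at htan ⊢
      rw [Matrix.transpose_smul, Matrix.smul_mul, Matrix.mul_smul, ← smul_add, htan,
        smul_zero]
    have h1 := hopt _ hmem
    unfold phi at h1
    rw [finner_smul_right, norm_smul_sq] at h1
    have hcomb : (1 - t) • (X + ζ) + t • X = X + (1 - t) • ζ := by module
    have hcvx : h (X + (1 - t) • ζ) ≤ (1 - t) * h (X + ζ) + t * h X := by
      have := hconv.2 (Set.mem_univ (X + ζ)) (Set.mem_univ X)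
        (by linarith : (0:ℝ) ≤ 1 - t) ht0.le (by ring)
      rw [hcomb] at this
      simpa [smul_eq_mul] using this
    have key : t * (finner v ζ + h (X + ζ) - h X)
        ≤ (1 / (2 * γ)) * (t ^ 2 - 2 * t) * ‖ζ‖ ^ 2 := by nlinarith [h1, hcvx]
    rw [← mul_le_mul_iff_right₀ ht0]
    have hγ' : (0:ℝ) < 2 * γ := by linarith
    have e1 : t * (finner v ζ + h (X + ζ) - h X + 1 / γ * ‖ζ‖ ^ 2)
        = t * (finner v ζ + h (X + ζ) - h X) + t / γ * ‖ζ‖ ^ 2 := by ring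
    have e2 : (1 / (2 * γ)) * (t ^ 2 - 2 * t) * ‖ζ‖ ^ 2
        = t * (t * (‖ζ‖ ^ 2 / (2 * γ))) - t / γ * ‖ζ‖ ^ 2 := by field_simp
    rw [e1]
    linarith [key, e2.le, e2.ge]
  have hA : finner v ζ + h (X + ζ) - h X + (1 / γ) * ‖ζ‖ ^ 2 ≤ 0 :=
    le_zero_of_forall_le_mul (by positivity) hstep
  -- Step A': multiplied by η
  have hA' : η * finner v ζ + η * h (X + ζ) - η * h X + η / γ * ‖ζ‖ ^ 2 ≤ 0 := by
    have h' := mul_nonpos_of_nonneg_of_nonpos hη0.le hA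
    ring_nf at h' ⊢
    linarith
  -- Step B: convexity along the segment
  have hB : h (X + η • ζ) ≤ (1 - η) * h X + η * h (X + ζ) := by
    have hcomb : (1 - η) • X + η • (X + ζ) = X + η • ζ := by module
    have := hconv.2 (Set.mem_univ X) (Set.mem_univ (X + ζ))
      (by linarith : (0:ℝ) ≤ 1 - η) hη0.le (by ring)
    rw [hcomb] at this
    simpa [smul_eq_mul] using this
  -- Step C: Lipschitz bound
  have hC : h R ≤ h (X + η • ζ) + L_h * (M₂ * η ^ 2 * ‖ζ‖ ^ 2) := by
    have h1 := hlip R (X + η • ζ)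
    have h2 := le_abs_self (h R - h (X + η • ζ))
    have h3 : L_h * ‖R - (X + η • ζ)‖ ≤ L_h * (M₂ * η ^ 2 * ‖ζ‖ ^ 2) :=
      mul_le_mul_of_nonneg_left hRd hLh
    linarith
  -- Step E: Young's inequality
  have hE : η * finner (g - v) ζ ≤ (η ^ 2 / 2) * ‖g - v‖ ^ 2 + (1 / 2) * ‖ζ‖ ^ 2 := by
    have h0 : (0:ℝ) ≤ ‖η • (g - v) - ζ‖ ^ 2 := sq_nonneg _
    rw [norm_sub_sq_finner, finner_smul_left, norm_smul_sq] at h0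
    nlinarith [h0]
  have hsub : η * finner (g - v) ζ = η * finner g ζ - η * finner v ζ := by
    rw [finner_sub_left]; ring
  have hrev : ‖v - g‖ ^ 2 = ‖g - v‖ ^ 2 := by rw [norm_sub_rev]
  ring_nf at hf hC hB hA' hE hsub hrev ⊢
  nlinarith [hf, hC, hB, hA', hE, hsub, hrev]

end AuxLemmas

/-- expected one-step descent for R-ProxSGD:
`E[F(Retr_X(ηζ)) − F(X)] ≤ (L̃η² − η/γ + 1/2) E[‖ζ‖²] + η²σ²/(2s)`,
with `L̃ = L_R/2 + L_h M₂`. -/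
theorem expected_descent_RProxSGD {d r : ℕ}
    {Ω : Type*} [MeasurableSpace Ω] (P : Measure Ω) [IsProbabilityMeasure P]
    (γ η L_R L_h M₂ σ s : ℝ)
    (hη0 : 0 < η) (hη1 : η ≤ 1) (hγ : 0 < γ)
    (hLR : 0 < L_R) (hLh : 0 < L_h) (hM₂ : 0 < M₂) (hσ : 0 ≤ σ) (hs : 0 < s)
    (f h : Mat d r → ℝ)
    (hconv : ConvexOn ℝ Set.univ h)
    (hlip : ∀ A B : Mat d r, |h A - h B| ≤ L_h * ‖A - B‖)
    (hdiff : Differentiable ℝ f)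
    (Gf : Mat d r → Mat d r)
    (hgrad : ∀ Y u : Mat d r, (fderiv ℝ f Y) u = finner (Gf Y) u)
    (X v ζ : Ω → Mat d r)
    (has : ∀ᵐ ω ∂P, Stiefel (X ω) ∧ IsSubMin γ h (X ω) (v ω) (ζ ω) ∧
      f (polarRetr (X ω) (η • ζ ω)) ≤
        f (X ω) + η * finner (Gf (X ω)) (ζ ω) + (L_R * η ^ 2 / 2) * ‖ζ ω‖ ^ 2 ∧
      ‖polarRetr (X ω) (η • ζ ω) - (X ω + η • ζ ω)‖ ≤ M₂ * η ^ 2 * ‖ζ ω‖ ^ 2)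
    (hint1 : Integrable (fun ω =>
      f (polarRetr (X ω) (η • ζ ω)) + h (polarRetr (X ω) (η • ζ ω))) P)
    (hint2 : Integrable (fun ω => f (X ω) + h (X ω)) P)
    (hint3 : Integrable (fun ω => ‖ζ ω‖ ^ 2) P)
    (hint4 : Integrable (fun ω => ‖v ω - Gf (X ω)‖ ^ 2) P)
    (hvar : ∫ ω, ‖v ω - Gf (X ω)‖ ^ 2 ∂P ≤ σ ^ 2 / s) :
    ∫ ω, ((f (polarRetr (X ω) (η • ζ ω)) + h (polarRetr (X ω) (η • ζ ω)))
        - (f (X ω) + h (X ω))) ∂P ≤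
      ((L_R / 2 + L_h * M₂) * η ^ 2 - η / γ + 1 / 2) * (∫ ω, ‖ζ ω‖ ^ 2 ∂P)
        + η ^ 2 * σ ^ 2 / (2 * s) := by
  set c : ℝ := (L_R / 2 + L_h * M₂) * η ^ 2 - η / γ + 1 / 2 with hc
  have hle : ∀ᵐ ω ∂P,
      ((f (polarRetr (X ω) (η • ζ ω)) + h (polarRetr (X ω) (η • ζ ω)))
        - (f (X ω) + h (X ω)))
      ≤ c * ‖ζ ω‖ ^ 2 + (η ^ 2 / 2) * ‖v ω - Gf (X ω)‖ ^ 2 := by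
    filter_upwards [has] with ω hω
    obtain ⟨_, hmin, hf, hRd⟩ := hω
    exact pointwise_bound γ η L_R L_h M₂ hη0 hη1 hγ hLh.le f h hconv hlip
      (X ω) (v ω) (ζ ω) (polarRetr (X ω) (η • ζ ω)) (Gf (X ω)) hmin hf hRd
  have hLint : Integrable (fun ω =>
      (f (polarRetr (X ω) (η • ζ ω)) + h (polarRetr (X ω) (η • ζ ω)))
        - (f (X ω) + h (X ω))) P := hint1.sub hint2
  have hRint : Integrable (fun ω =>
      c * ‖ζ ω‖ ^ 2 + (η ^ 2 / 2) * ‖v ω - Gf (X ω)‖ ^ 2) P :=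
    (hint3.const_mul c).add (hint4.const_mul (η ^ 2 / 2))
  have h1 : ∫ ω, ((f (polarRetr (X ω) (η • ζ ω)) + h (polarRetr (X ω) (η • ζ ω)))
        - (f (X ω) + h (X ω))) ∂P
      ≤ ∫ ω, (c * ‖ζ ω‖ ^ 2 + (η ^ 2 / 2) * ‖v ω - Gf (X ω)‖ ^ 2) ∂P :=
    integral_mono_ae hLint hRint hle
  have h2 : ∫ ω, (c * ‖ζ ω‖ ^ 2 + (η ^ 2 / 2) * ‖v ω - Gf (X ω)‖ ^ 2) ∂P
      = c * (∫ ω, ‖ζ ω‖ ^ 2 ∂P) + (η ^ 2 / 2) * ∫ ω, ‖v ω - Gf (X ω)‖ ^ 2 ∂P := by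
    rw [integral_add (hint3.const_mul c) (hint4.const_mul (η ^ 2 / 2)),
      integral_const_mul, integral_const_mul]
  have h3 : (η ^ 2 / 2) * (∫ ω, ‖v ω - Gf (X ω)‖ ^ 2 ∂P) ≤ (η ^ 2 / 2) * (σ ^ 2 / s) :=
    mul_le_mul_of_nonneg_left hvar (by positivity)
  have h4 : (η ^ 2 / 2) * (σ ^ 2 / s) = η ^ 2 * σ ^ 2 / (2 * s) := by ring
  linarith [h1, h2.le, h2.ge, h3, h4.le, h4.ge]
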